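/- Let G be a group with a subgroup chain {1} = G₀ ≤ G₁ ≤ ⋯ ≤ G_m = G, coset leader sets CL_k ⊆ G_k (each containing 1 and exactly one element of each left coset of G_{k−1} in G_k), and subsets X_k ⊆ G_k for 0 ≤ k ≤ m with X₀ = ∅. Assume the Error Control Property: for every 1 ≤ k ≤ m, every b ∈ X_k ∪ X_k⁻¹, and every c ∈ CL_k, either bc ∈ CL_k or c⁻¹bc ∈ X_{k−1} ∪ X_{k−1}⁻¹. Then for every g ∈ G with canonical form g = c_m⋯c_1 (c_k ∈ CL_k) and every b ∈ X_m ∪ X_m⁻¹, the canonical form of bg is bg = c'_m⋯c'_1 with c'_k ∈ CL_k, where c'_i = c_i for all but at most one index i, and for any index j with c'_j ≠ c_j there is b' ∈ X_j ∪ X_j⁻¹ with c'_j = b'c_j. -/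
import Mathlib


open scoped Pointwise

namespace GroupCode

/-- The product `cs_ℓ ⋯ cs_{k+1}`. -/
def pprodRange {α : Type*} [Monoid α] (cs : ℕ → α) (k ℓ : ℕ) : α :=
  (List.range (ℓ - k)).foldl (fun acc j => cs (k + 1 + j) * acc) 1

theorem pprodRange_zero {α : Type*} [Monoid α] (cs : ℕ → α) :
    pprodRange cs 0 0 = 1 := rfl

theorem pprodRange_succ {α : Type*} [Monoid α] (cs : ℕ → α) (n : ℕ) :
    pprodRange cs 0 (n + 1) = cs (n + 1) * pprodRange cs 0 n := by
  simp [pprodRange, List.range_succ, Nat.add_comm]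

theorem pprodRange_congr {α : Type*} [Monoid α] (cs cs' : ℕ → α) (n : ℕ)
    (h : ∀ i, 1 ≤ i → i ≤ n → cs i = cs' i) :
    pprodRange cs 0 n = pprodRange cs' 0 n := by
  induction n with
  | zero => rfl
  | succ k ih =>
    rw [pprodRange_succ, pprodRange_succ, h (k + 1) (Nat.succ_le_succ (Nat.zero_le k)) le_rfl,
      ih fun i h1 h2 => h i h1 (h2.trans (Nat.le_succ k))]

end GroupCode

open GroupCode in
/-- **Theorem (Statement 10).** Under the Error Control Property, multiplying a group
element `g = c_m ⋯ c_1` (in canonical form) by a generator `b ∈ X_m ∪ X_m⁻¹` changes at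
most one factor of its canonical form, and the changed factor is obtained from the old
one by left multiplication by a generator. -/
theorem error_control_canonical_form
    {G : Type*} [Group G] (m : ℕ) (hm : 1 ≤ m)
    (Gs : ℕ → Subgroup G) (hG0 : Gs 0 = ⊥) (hGm : Gs m = ⊤)
    (hle : ∀ k < m, Gs k ≤ Gs (k + 1))
    (CL : ℕ → Set G)
    (hCL : ∀ k < m, CL (k + 1) ⊆ (Gs (k + 1) : Set G) ∧ (1 : G) ∈ CL (k + 1) ∧
      ∀ a ∈ Gs (k + 1), ∃! c, c ∈ CL (k + 1) ∧ c⁻¹ * a ∈ Gs k)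
    (X : ℕ → Set G) (hX0 : X 0 = ∅) (hXsub : ∀ k ≤ m, X k ⊆ (Gs k : Set G))
    (hECP : ∀ k < m, ∀ b ∈ X (k + 1) ∪ (X (k + 1))⁻¹, ∀ c ∈ CL (k + 1),
      b * c ∈ CL (k + 1) ∨ c⁻¹ * b * c ∈ X k ∪ (X k)⁻¹)
    (g : G) (cs : ℕ → G) (hcs : ∀ k, 1 ≤ k → k ≤ m → cs k ∈ CL k)
    (hg : g = pprodRange cs 0 m)
    (b : G) (hb : b ∈ X m ∪ (X m)⁻¹) :
    ∃ cs' : ℕ → G,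
      (∀ k, 1 ≤ k → k ≤ m → cs' k ∈ CL k) ∧
      b * g = pprodRange cs' 0 m ∧
      (∃ j₀, ∀ i, 1 ≤ i → i ≤ m → i ≠ j₀ → cs' i = cs i) ∧
      (∀ j, 1 ≤ j → j ≤ m → cs' j ≠ cs j →
        ∃ b' ∈ X j ∪ (X j)⁻¹, cs' j = b' * cs j) := by
  have key : ∀ k, k ≤ m → ∀ b ∈ X k ∪ (X k)⁻¹,
      ∃ cs' : ℕ → G, ∃ j₀ : ℕ, 1 ≤ j₀ ∧ j₀ ≤ k ∧
        (∀ i, i ≠ j₀ → cs' i = cs i) ∧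
        (∀ i, 1 ≤ i → i ≤ m → cs' i ∈ CL i) ∧
        b * pprodRange cs 0 k = pprodRange cs' 0 k ∧
        (∃ b' ∈ X j₀ ∪ (X j₀)⁻¹, cs' j₀ = b' * cs j₀) := by
    intro k
    induction k with
    | zero =>
      intro _ b hb
      rw [hX0] at hb
      simp at hb
    | succ k ih =>
      intro hk b hb
      have hkm : k < m := hk
      have hc : cs (k + 1) ∈ CL (k + 1) :=
        hcs (k + 1) (Nat.succ_le_succ (Nat.zero_le k)) hk
      rcases hECP k hkm b hb (cs (k + 1)) hc with h1 | h2
      · -- changed factor at position k+1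
        refine ⟨Function.update cs (k + 1) (b * cs (k + 1)), k + 1,
          Nat.succ_le_succ (Nat.zero_le k), le_rfl, ?_, ?_, ?_, ?_⟩
        · intro i hi; exact Function.update_of_ne hi _ _
        · intro i h1i h2i
          rcases eq_or_ne i (k + 1) with rfl | hne
          · simpa using h1
          · rw [Function.update_of_ne hne]; exact hcs i h1i h2i
        · rw [pprodRange_succ, pprodRange_succ, Function.update_self, ← mul_assoc]
          congr 1
          exact pprodRange_congr _ _ k fun i _ h2 =>
            (Function.update_of_ne (by omega) _ _).symm
        · exact ⟨b, hb, by rw [Function.update_self]⟩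
      · -- pass error down
        obtain ⟨cs', j₀, hj1, hj2, hagree, hmem, hprod, hb'⟩ :=
          ih (Nat.le_of_succ_le hk) _ h2
        refine ⟨cs', j₀, hj1, hj2.trans (Nat.le_succ k), hagree, hmem, ?_, hb'⟩
        have hck : cs' (k + 1) = cs (k + 1) := hagree _ (by omega)
        rw [pprodRange_succ, pprodRange_succ, hck, ← hprod]
        group
  obtain ⟨cs', j₀, hj1, hj2, hagree, hmem, hprod, b', hb', hbj⟩ := key m le_rfl b hb
  refine ⟨cs', hmem, by rw [hg]; exact hprod, ⟨j₀, fun i _ _ hne => hagree i hne⟩, ?_⟩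
  intro j _ _ hne
  rcases eq_or_ne j j₀ with rfl | hjj
  · exact ⟨b', hb', hbj⟩
  · exact absurd (hagree j hjj) hne
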